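/- In a graph with diameter D, flooding k distinct messages asynchronously, where each edge delivers one message per time unit (FIFO) and each node forwards every newly received message on all edges, completes all k broadcasts within D + k - 1 time units. -/
import Mathlib


/-- Topkis's theorem: asynchronously flooding `k` distinct messages in a connected graph of
diameter `D`, where each (directed) edge carries at most one message per unit time,
delivery over an edge takes at most one time unit, and nodes forward every newly received
message on all edges as soon as the edge is free, completes within `D + k - 1` time units:
every node receives every message by time `D + k - 1`.

`arrival i v` is the time node `v` first has message `i`; `send i u v` is the time message
`i` is sent across the directed edge `(u, v)`. -/
theorem flooding_k_messages {V : Type*} (G : SimpleGraph V) (hconn : G.Connected)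
    (D : ℕ) (hD : ∀ u v : V, G.dist u v ≤ D)
    (k : ℕ) (hk : 1 ≤ k) (origin : Fin k → V)
    (arrival : Fin k → V → ℕ) (send : Fin k → V → V → ℕ)
    -- each message starts at its origin at time 0
    (horigin : ∀ i, arrival i (origin i) = 0)
    -- a message is sent on an edge only after the sender has it
    (hsend_after : ∀ i u v, G.Adj u v → arrival i u ≤ send i u v)
    -- delivery over an edge takes at most one time unit
    (hdeliver : ∀ i u v, G.Adj u v → arrival i v ≤ send i u v + 1)
    -- each directed edge carries at most one message per unit time
    (hcap : ∀ i j u v, G.Adj u v → i ≠ j → send i u v ≠ send j u v)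
    -- edges are work-conserving: a pending message waits only because the edge is busy
    (hbusy : ∀ i u v, G.Adj u v → ∀ t, arrival i u ≤ t → t < send i u v →
      ∃ j, send j u v = t) :
    ∀ i v, arrival i v ≤ D + k - 1 := by
  classical
  -- Key lemma: for every `m, c`, every message `i` and node `v` with
  -- `dist (origin i) v ≤ m`, either `i` reaches `v` by time `m + c`, or at least
  -- `c + 1` distinct messages reach `v` by time `m + c`.
  have key : ∀ m c : ℕ, ∀ (i : Fin k) (v : V), G.dist (origin i) v ≤ m →
      arrival i v ≤ m + c ∨
        c + 1 ≤ (Finset.univ.filter fun j => arrival j v ≤ m + c).card := by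
    intro m
    induction m with
    | zero =>
      intro c i v hdist
      left
      have hz : G.dist (origin i) v = 0 := Nat.le_zero.mp hdist
      have : origin i = v := (hconn.dist_eq_zero_iff).mp hz
      rw [← this, horigin i]
      omega
    | succ m ih =>
      intro c i v hdist
      by_cases hle : G.dist (origin i) v ≤ m
      · rcases ih (c + 1) i v hle with h | h
        · left; omega
        · right
          refine le_trans (by omega) (le_trans h (Finset.card_le_card ?_))
          intro j hj
          simp only [Finset.mem_filter, Finset.mem_univ, true_and] at hj ⊢
          omega
      · -- `dist (origin i) v = m + 1`; pick a neighbor `u` closer to the origin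
        obtain ⟨u, hadj, hdu⟩ : ∃ u, G.Adj u v ∧ G.dist (origin i) u ≤ m := by
          obtain ⟨p, hp⟩ := hconn.exists_walk_length_eq_dist (origin i) v
          have hlen : p.reverse.length = G.dist (origin i) v := by
            rw [SimpleGraph.Walk.length_reverse, hp]
          cases hq : p.reverse with
          | nil =>
            exfalso
            rw [hq] at hlen
            simp only [SimpleGraph.Walk.length_nil] at hlen
            omega
          | cons hvw q =>
            rename_i w
            refine ⟨w, hvw.symm, ?_⟩
            have : G.dist (origin i) w = G.dist w (origin i) := SimpleGraph.dist_comm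
            rw [this]
            have h1 : G.dist w (origin i) ≤ q.length := SimpleGraph.dist_le q
            have h2 : q.length + 1 = G.dist (origin i) v := by
              rw [hq] at hlen
              simpa using hlen
            omega
        by_cases hsi : send i u v ≤ m + c
        · left
          have := hdeliver i u v hadj
          omega
        · push_neg at hsi
          right
          -- `b` is the least time such that the edge `(u,v)` is busy at every time
          -- in `[b, m + c]`.
          have hPex : ∃ t : ℕ, ∀ t', t ≤ t' → t' ≤ m + c → ∃ j, send j u v = t' :=
            ⟨m + c + 1, fun t' h1 h2 => absurd h1 (by omega)⟩
          set b := Nat.find hPex with hbdef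
          have hPb : ∀ t', b ≤ t' → t' ≤ m + c → ∃ j, send j u v = t' := Nat.find_spec hPex
          have hble : b ≤ m + c + 1 := Nat.find_le (fun t' h1 h2 => absurd h1 (by omega))
          -- below `b`, nothing is pending: any message at `u` by time `b - 1` has
          -- already been sent by time `b - 1`.
          have hnopend : ∀ j : Fin k, b ≠ 0 → arrival j u ≤ b - 1 → send j u v ≤ b - 1 := by
            intro j hb0 hj
            by_contra hcon
            push_neg at hcon
            have hPb1 : ∀ t', b - 1 ≤ t' → t' ≤ m + c → ∃ j, send j u v = t' := by
              intro t' h1 h2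
              rcases Nat.lt_or_ge t' b with h | h
              · have ht' : t' = b - 1 := by omega
                subst ht'
                exact hbusy j u v hadj (b - 1) hj (by omega)
              · exact hPb t' h h2
            exact Nat.find_min hPex (show b - 1 < b by omega) hPb1
          -- occupied slots `[b, m+c]` inject into messages arriving at `v` by `m+1+c`
          have hslots : Finset.Icc b (m + c) ⊆
              (Finset.univ.filter fun j => arrival j v ≤ m + 1 + c).image
                (fun j => send j u v) := by
            intro t ht
            simp only [Finset.mem_Icc] at ht
            obtain ⟨j, hj⟩ := hPb t ht.1 ht.2
            refine Finset.mem_image.mpr ⟨j, ?_, hj⟩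
            simp only [Finset.mem_filter, Finset.mem_univ, true_and]
            have := hdeliver j u v hadj
            omega
          have hinj : Function.Injective (fun j : Fin k => send j u v) := by
            intro a b hab
            by_contra hne
            exact hcap a b u v hadj hne hab
          rcases Nat.lt_or_ge b (m + 1) with hbm | hbm
          · -- enough occupied slots alone
            have h1 : (Finset.Icc b (m + c)).card ≤
                ((Finset.univ.filter fun j => arrival j v ≤ m + 1 + c).image
                  (fun j => send j u v)).card := Finset.card_le_card hslots
            have h2 : ((Finset.univ.filter fun j => arrival j v ≤ m + 1 + c).image
                (fun j => send j u v)).card ≤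
                (Finset.univ.filter fun j => arrival j v ≤ m + 1 + c).card :=
              Finset.card_image_le
            rw [Nat.card_Icc] at h1
            omega
          · -- `b ≥ m + 1`: use the induction hypothesis at `u` at time `b - 1`
            have hb0 : b ≠ 0 := by omega
            have harr : ¬ arrival i u ≤ b - 1 := by
              intro hcon
              have := hnopend i hb0 hcon
              omega
            have he : b - 1 = m + (b - 1 - m) := by omega
            rcases ih (b - 1 - m) i u hdu with h | h
            · exact absurd (by omega : arrival i u ≤ b - 1) harr
            · -- `b - m` messages are at `u` (hence sent, hence at `v`) before time `b`
              set E := Finset.univ.filter fun j : Fin k => arrival j u ≤ b - 1 with hE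
              have hEcard : b - m ≤ E.card := by
                have : (Finset.univ.filter fun j : Fin k => arrival j u ≤ m + (b - 1 - m)) = E := by
                  apply Finset.filter_congr
                  intro j _
                  constructor <;> intro <;> omega
                rw [this] at h
                omega
              have hEsub : E.image (fun j => send j u v) ⊆
                  (Finset.univ.filter fun j => arrival j v ≤ m + 1 + c).image
                    (fun j => send j u v) := by
                apply Finset.image_subset_image
                intro j hj
                simp only [hE, Finset.mem_filter, Finset.mem_univ, true_and] at hj ⊢
                have hs := hnopend j hb0 hj
                have := hdeliver j u v hadj
                omega
              have hdisj : Disjoint (Finset.Icc b (m + c)) (E.image fun j => send j u v) := by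
                rw [Finset.disjoint_right]
                intro t htE htI
                simp only [Finset.mem_Icc] at htI
                obtain ⟨j, hj, hjt⟩ := Finset.mem_image.mp htE
                simp only [hE, Finset.mem_filter, Finset.mem_univ, true_and] at hj
                have := hnopend j hb0 hj
                omega
              have hunion : (Finset.Icc b (m + c)) ∪ (E.image fun j => send j u v) ⊆
                  (Finset.univ.filter fun j => arrival j v ≤ m + 1 + c).image
                    (fun j => send j u v) :=
                Finset.union_subset hslots hEsub
              have hcard1 : (Finset.Icc b (m + c)).card + E.card ≤
                  (Finset.univ.filter fun j => arrival j v ≤ m + 1 + c).card := by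
                have e1 : ((Finset.Icc b (m + c)) ∪ (E.image fun j => send j u v)).card =
                    (Finset.Icc b (m + c)).card + (E.image fun j => send j u v).card :=
                  Finset.card_union_of_disjoint hdisj
                have e2 : (E.image fun j => send j u v).card = E.card :=
                  Finset.card_image_of_injective E hinj
                have e3 := Finset.card_le_card hunion
                have e4 : ((Finset.univ.filter fun j => arrival j v ≤ m + 1 + c).image
                    (fun j => send j u v)).card ≤
                    (Finset.univ.filter fun j => arrival j v ≤ m + 1 + c).card :=
                  Finset.card_image_le
                omega
              rw [Nat.card_Icc] at hcard1
              omega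
  -- conclude
  intro i v
  rcases key D (k - 1) i v (hD (origin i) v) with h | h
  · omega
  · have hmem : i ∈ Finset.univ.filter fun j => arrival j v ≤ D + (k - 1) := by
      by_contra hcon
      have hsub : (Finset.univ.filter fun j => arrival j v ≤ D + (k - 1)) ⊆
          Finset.univ.erase i := by
        intro j hj
        exact Finset.mem_erase.mpr ⟨fun he => hcon (he ▸ hj), Finset.mem_univ j⟩
      have := Finset.card_le_card hsub
      rw [Finset.card_erase_of_mem (Finset.mem_univ i)] at this
      simp only [Finset.card_univ, Fintype.card_fin] at this
      omega
    simp only [Finset.mem_filter, Finset.mem_univ, true_and] at hmem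
    omega
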